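/- arXiv:2004.09993 — 2 statements merged into one kernel-verified Lean document; each statement's English description precedes it below -/
import Mathlib

section
/- Let X, Y be n-by-n positive semidefinite complex matrices and let g be a monotone (nondecreasing) convex continuous function on [0,∞). Then there exists an n-by-n unitary matrix W such that (g(X) + g(Y))/2 ≥ W g((X+Y)/2) W* in the Loewner order. -/
open Matrix
open scoped ComplexOrder

private lemma quad_conj {n : ℕ} {U : Matrix (Fin n) (Fin n) ℂ}
    (d : Fin n → ℝ) (x : Fin n → ℂ) :
    star x ⬝ᵥ ((U * diagonal ((RCLike.ofReal : ℝ → ℂ) ∘ d) * star U) *ᵥ x)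
      = ((∑ i, d i * ‖(star U *ᵥ x) i‖ ^ 2 : ℝ) : ℂ) := by
  set z := star U *ᵥ x with hz
  have hsz : star z = star x ᵥ* U := by
    rw [hz, star_mulVec, star_eq_conjTranspose, conjTranspose_conjTranspose]
  calc star x ⬝ᵥ ((U * diagonal ((RCLike.ofReal : ℝ → ℂ) ∘ d) * star U) *ᵥ x)
      = star x ⬝ᵥ (U *ᵥ (diagonal ((RCLike.ofReal : ℝ → ℂ) ∘ d) *ᵥ z)) := by
        rw [← mulVec_mulVec, ← mulVec_mulVec]
    _ = (star x ᵥ* U) ⬝ᵥ (diagonal ((RCLike.ofReal : ℝ → ℂ) ∘ d) *ᵥ z) := by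
        rw [dotProduct_mulVec]
    _ = star z ⬝ᵥ (diagonal ((RCLike.ofReal : ℝ → ℂ) ∘ d) *ᵥ z) := by rw [hsz]
    _ = ((∑ i, d i * ‖z i‖ ^ 2 : ℝ) : ℂ) := by
        push_cast
        simp only [dotProduct, mulVec_diagonal, Function.comp_apply]
        refine Finset.sum_congr rfl fun i _ => ?_
        have : z i * (starRingEnd ℂ) (z i) = ((‖z i‖ ^ 2 : ℝ) : ℂ) := by
          rw [Complex.mul_conj']; push_cast; ring
        rw [Pi.star_apply, RCLike.star_def, show (starRingEnd ℂ) (z i) * (RCLike.ofReal (d i) * z i)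
            = RCLike.ofReal (d i) * (z i * (starRingEnd ℂ) (z i)) by ring, this]
        norm_num

private lemma dot_self_eq {n : ℕ} (x : Fin n → ℂ) :
    star x ⬝ᵥ x = ((∑ i, ‖x i‖ ^ 2 : ℝ) : ℂ) := by
  simp only [dotProduct, Pi.star_apply, RCLike.star_def]
  push_cast
  refine Finset.sum_congr rfl fun i _ => ?_
  rw [← Complex.mul_conj']; ring

private lemma weights_sum {n : ℕ} {U : Matrix (Fin n) (Fin n) ℂ}
    (hU : U ∈ Matrix.unitaryGroup (Fin n) ℂ)
    (x : Fin n → ℂ) : ∑ i, ‖(star U *ᵥ x) i‖ ^ 2 = ∑ i, ‖x i‖ ^ 2 := by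
  have h1 : U * diagonal ((RCLike.ofReal : ℝ → ℂ) ∘ (fun _ => (1:ℝ))) * star U = 1 := by
    have hd : diagonal ((RCLike.ofReal : ℝ → ℂ) ∘ (fun _ => (1:ℝ)))
        = (1 : Matrix (Fin n) (Fin n) ℂ) := by
      simp [Function.comp_def, Matrix.diagonal_one]
    rw [hd, mul_one, (Matrix.mem_unitaryGroup_iff).mp hU]
  have h2 := quad_conj (U := U) (fun _ => (1:ℝ)) x
  rw [h1, one_mulVec, dot_self_eq] at h2
  have h3 := Complex.ofReal_injective h2
  simpa using h3.symm

private lemma span_finrank {n : ℕ} (b : OrthonormalBasis (Fin n) ℂ (EuclideanSpace ℂ (Fin n)))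
    (s : Finset (Fin n)) :
    Module.finrank ℂ (Submodule.span ℂ (⇑b '' ↑s)) = s.card := by
  have hli : LinearIndependent ℂ (fun i : ↥(↑s : Set (Fin n)) => b i) :=
    (b.orthonormal.comp _ Subtype.val_injective).linearIndependent
  rw [show ⇑b '' ↑s = Set.range (fun i : ↥(↑s : Set (Fin n)) => b i) from Set.image_eq_range _ _]
  rw [finrank_span_eq_card hli]
  simp

private lemma mem_span_iff {n : ℕ} (b : OrthonormalBasis (Fin n) ℂ (EuclideanSpace ℂ (Fin n)))
    (s : Finset (Fin n)) (x : EuclideanSpace ℂ (Fin n)) :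
    x ∈ Submodule.span ℂ (⇑b '' ↑s) ↔ ∀ i ∉ s, b.repr x i = 0 := by
  rw [← b.coe_toBasis, Module.Basis.mem_span_image, Finsupp.support_subset_iff]
  have hrepr : ∀ i, b.toBasis.repr x i = b.repr x i := fun i => b.coe_toBasis_repr_apply x i
  simp only [hrepr, Finset.mem_coe]

private lemma exists_inf {n : ℕ} {S T : Submodule ℂ (EuclideanSpace ℂ (Fin n))}
    (h : n < Module.finrank ℂ S + Module.finrank ℂ T) :
    ∃ x, x ∈ S ∧ x ∈ T ∧ x ≠ 0 := by
  by_contra hc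
  push_neg at hc
  have hbot : S ⊓ T = ⊥ := by
    rw [Submodule.eq_bot_iff]
    exact fun x hx => hc x hx.1 hx.2
  have heq := Submodule.finrank_sup_add_finrank_inf_eq S T
  rw [hbot, finrank_bot, add_zero] at heq
  have hle : Module.finrank ℂ ↥(S ⊔ T) ≤ Module.finrank ℂ (EuclideanSpace ℂ (Fin n)) :=
    Submodule.finrank_le _
  rw [finrank_euclideanSpace_fin] at hle
  omega

private lemma perm_conj {n : ℕ} (π : Equiv.Perm (Fin n)) :
    ∃ P ∈ Matrix.unitaryGroup (Fin n) ℂ,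
      ∀ d : Fin n → ℂ, P * diagonal d * star P = diagonal (d ∘ π) := by
  refine ⟨Matrix.of (fun i j => if j = π i then 1 else 0), ?_, ?_⟩
  · rw [Matrix.mem_unitaryGroup_iff]
    ext i j
    simp only [mul_apply, star_eq_conjTranspose, conjTranspose_apply, of_apply, one_apply,
      apply_ite (star : ℂ → ℂ), star_one, star_zero, mul_ite, ite_mul, one_mul, mul_one,
      mul_zero, zero_mul]
    rw [Finset.sum_ite_eq' Finset.univ (π j) (fun k => if k = π i then (1:ℂ) else 0)]
    simp [EmbeddingLike.apply_eq_iff_eq, eq_comm]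
  · intro d
    ext i j
    simp only [mul_apply, of_apply, star_eq_conjTranspose, conjTranspose_apply,
      apply_ite (star : ℂ → ℂ), star_one, star_zero, mul_ite, ite_mul, one_mul, mul_one,
      mul_zero, zero_mul, diagonal_apply, Function.comp_apply,
      Finset.sum_ite_eq', Finset.sum_ite_eq, Finset.mem_univ, if_true]
    simp [EmbeddingLike.apply_eq_iff_eq, eq_comm]
    split <;> simp_all
private lemma repr_eq_mulVec {n : ℕ} {C : Matrix (Fin n) (Fin n) ℂ} (hC : C.IsHermitian)
    (u : EuclideanSpace ℂ (Fin n)) (i : Fin n) :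
    hC.eigenvectorBasis.repr u i
      = (star (hC.eigenvectorUnitary : Matrix (Fin n) (Fin n) ℂ)
          *ᵥ ((WithLp.equiv 2 (Fin n → ℂ)) u)) i := by
  rw [OrthonormalBasis.repr_apply_apply, EuclideanSpace.inner_eq_star_dotProduct]
  simp [Matrix.mulVec, dotProduct, star_eq_conjTranspose, conjTranspose_apply,
    Matrix.IsHermitian.eigenvectorUnitary_apply, mul_comm]

private lemma key_ineq {n : ℕ} (X Y : Matrix (Fin n) (Fin n) ℂ)
    (hX : X.PosSemidef) (hY : Y.PosSemidef) (g : ℝ → ℝ)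
    (hg_mono : MonotoneOn g (Set.Ici 0)) (hg_conv : ConvexOn ℝ (Set.Ici 0) g)
    (hMh : ((2:ℂ)⁻¹ • (X + Y)).IsHermitian) (hM : ((2:ℂ)⁻¹ • (X + Y)).PosSemidef)
    (hBh : ((2:ℂ)⁻¹ • (cfc g X + cfc g Y)).IsHermitian) (k : Fin n) :
    g (hMh.eigenvalues (Tuple.sort hMh.eigenvalues k))
      ≤ hBh.eigenvalues (Tuple.sort hBh.eigenvalues k) := by
  set μ := hMh.eigenvalues with hμdef
  set β := hBh.eigenvalues with hβdef
  set τ := Tuple.sort μ with hτdef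
  set σ := Tuple.sort β with hσdef
  set sM : Finset (Fin n) := (Finset.Ici k).image τ with hsMdef
  set sB : Finset (Fin n) := (Finset.Iic k).image σ with hsBdef
  set bM := hMh.eigenvectorBasis with hbMdef
  set bB := hBh.eigenvectorBasis with hbBdef
  -- find a common unit vector
  have hdim : n < Module.finrank ℂ (Submodule.span ℂ (⇑bM '' ↑sM))
      + Module.finrank ℂ (Submodule.span ℂ (⇑bB '' ↑sB)) := by
    rw [span_finrank, span_finrank, hsMdef, hsBdef,
      Finset.card_image_of_injective _ τ.injective,
      Finset.card_image_of_injective _ σ.injective, Fin.card_Ici, Fin.card_Iic]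
    have := k.isLt
    omega
  obtain ⟨v, hvS, hvT, hv0⟩ := exists_inf hdim
  set u : EuclideanSpace ℂ (Fin n) := ((‖v‖ : ℂ))⁻¹ • v with hudef
  have hu1 : ‖u‖ = 1 := norm_smul_inv_norm hv0
  have huS : u ∈ Submodule.span ℂ (⇑bM '' ↑sM) := Submodule.smul_mem _ _ hvS
  have huT : u ∈ Submodule.span ℂ (⇑bB '' ↑sB) := Submodule.smul_mem _ _ hvT
  set x : Fin n → ℂ := (WithLp.equiv 2 (Fin n → ℂ)) u with hxdef
  have hsum : ∑ i, ‖x i‖ ^ 2 = 1 := by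
    have h := EuclideanSpace.norm_eq u
    rw [hu1] at h
    have h2 : √(∑ i, ‖u i‖ ^ 2) = 1 := h.symm
    have h3 := Real.sqrt_eq_one.mp h2
    exact h3
  -- weights
  set wM : Fin n → ℝ := fun i => ‖(star (hMh.eigenvectorUnitary : Matrix (Fin n) (Fin n) ℂ)
    *ᵥ x) i‖ ^ 2 with hwMdef
  set wB : Fin n → ℝ := fun i => ‖(star (hBh.eigenvectorUnitary : Matrix (Fin n) (Fin n) ℂ)
    *ᵥ x) i‖ ^ 2 with hwBdef
  set wX : Fin n → ℝ := fun i => ‖(star (hX.1.eigenvectorUnitary : Matrix (Fin n) (Fin n) ℂ)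
    *ᵥ x) i‖ ^ 2 with hwXdef
  set wY : Fin n → ℝ := fun i => ‖(star (hY.1.eigenvectorUnitary : Matrix (Fin n) (Fin n) ℂ)
    *ᵥ x) i‖ ^ 2 with hwYdef
  have hwM0 : ∀ i, 0 ≤ wM i := fun i => sq_nonneg _
  have hwB0 : ∀ i, 0 ≤ wB i := fun i => sq_nonneg _
  have hwX0 : ∀ i, 0 ≤ wX i := fun i => sq_nonneg _
  have hwY0 : ∀ i, 0 ≤ wY i := fun i => sq_nonneg _
  have hwM1 : ∑ i, wM i = 1 := by
    rw [hwMdef]; rw [weights_sum hMh.eigenvectorUnitary.2 x]; exact hsum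
  have hwB1 : ∑ i, wB i = 1 := by
    rw [hwBdef]; rw [weights_sum hBh.eigenvectorUnitary.2 x]; exact hsum
  have hwX1 : ∑ i, wX i = 1 := by
    rw [hwXdef]; rw [weights_sum hX.1.eigenvectorUnitary.2 x]; exact hsum
  have hwY1 : ∑ i, wY i = 1 := by
    rw [hwYdef]; rw [weights_sum hY.1.eigenvectorUnitary.2 x]; exact hsum
  -- vanishing of weights off the supports
  have hwM_supp : ∀ i ∉ sM, wM i = 0 := by
    intro i hi
    have := (mem_span_iff bM sM u).mp huS i hi
    rw [hbMdef, repr_eq_mulVec hMh u i, ← hxdef] at this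
    simp only [hwMdef]
    rw [this]
    simp
  have hwB_supp : ∀ i ∉ sB, wB i = 0 := by
    intro i hi
    have := (mem_span_iff bB sB u).mp huT i hi
    rw [hbBdef, repr_eq_mulVec hBh u i, ← hxdef] at this
    simp only [hwBdef]
    rw [this]
    simp
  -- quadratic forms
  have qM : star x ⬝ᵥ (((2:ℂ)⁻¹ • (X + Y)) *ᵥ x) = ((∑ i, μ i * wM i : ℝ) : ℂ) := by
    conv_lhs => rw [hMh.spectral_theorem]
    exact quad_conj μ x
  have qB : star x ⬝ᵥ (((2:ℂ)⁻¹ • (cfc g X + cfc g Y)) *ᵥ x) = ((∑ i, β i * wB i : ℝ) : ℂ) := by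
    conv_lhs => rw [hBh.spectral_theorem]
    exact quad_conj β x
  have qX : star x ⬝ᵥ (X *ᵥ x) = ((∑ i, hX.1.eigenvalues i * wX i : ℝ) : ℂ) := by
    conv_lhs => rw [hX.1.spectral_theorem]
    exact quad_conj hX.1.eigenvalues x
  have qY : star x ⬝ᵥ (Y *ᵥ x) = ((∑ i, hY.1.eigenvalues i * wY i : ℝ) : ℂ) := by
    conv_lhs => rw [hY.1.spectral_theorem]
    exact quad_conj hY.1.eigenvalues x
  have hcfcX : cfc g X = (hX.1.eigenvectorUnitary : Matrix (Fin n) (Fin n) ℂ)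
      * diagonal ((RCLike.ofReal : ℝ → ℂ) ∘ (g ∘ hX.1.eigenvalues))
      * star (hX.1.eigenvectorUnitary : Matrix (Fin n) (Fin n) ℂ) := (hX.1.cfc_eq g).trans rfl
  have hcfcY : cfc g Y = (hY.1.eigenvectorUnitary : Matrix (Fin n) (Fin n) ℂ)
      * diagonal ((RCLike.ofReal : ℝ → ℂ) ∘ (g ∘ hY.1.eigenvalues))
      * star (hY.1.eigenvectorUnitary : Matrix (Fin n) (Fin n) ℂ) := (hY.1.cfc_eq g).trans rfl
  have qgX : star x ⬝ᵥ ((cfc g X) *ᵥ x) = ((∑ i, g (hX.1.eigenvalues i) * wX i : ℝ) : ℂ) := by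
    conv_lhs => rw [hcfcX]
    exact quad_conj (g ∘ hX.1.eigenvalues) x
  have qgY : star x ⬝ᵥ ((cfc g Y) *ᵥ x) = ((∑ i, g (hY.1.eigenvalues i) * wY i : ℝ) : ℂ) := by
    conv_lhs => rw [hcfcY]
    exact quad_conj (g ∘ hY.1.eigenvalues) x
  -- linearity relations
  have linM : ((∑ i, μ i * wM i : ℝ) : ℂ)
      = (2:ℂ)⁻¹ * (((∑ i, hX.1.eigenvalues i * wX i : ℝ) : ℂ)
        + ((∑ i, hY.1.eigenvalues i * wY i : ℝ) : ℂ)) := by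
    rw [← qM, ← qX, ← qY, smul_mulVec, add_mulVec, dotProduct_smul, dotProduct_add]
    simp [smul_eq_mul]
  have linB : ((∑ i, β i * wB i : ℝ) : ℂ)
      = (2:ℂ)⁻¹ * (((∑ i, g (hX.1.eigenvalues i) * wX i : ℝ) : ℂ)
        + ((∑ i, g (hY.1.eigenvalues i) * wY i : ℝ) : ℂ)) := by
    rw [← qB, ← qgX, ← qgY, smul_mulVec, add_mulVec, dotProduct_smul, dotProduct_add]
    simp [smul_eq_mul]
  have linM' : (∑ i, μ i * wM i) = 2⁻¹ * ((∑ i, hX.1.eigenvalues i * wX i)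
      + (∑ i, hY.1.eigenvalues i * wY i)) := by
    apply Complex.ofReal_injective
    rw [linM]; push_cast; ring
  have linB' : (∑ i, β i * wB i) = 2⁻¹ * ((∑ i, g (hX.1.eigenvalues i) * wX i)
      + (∑ i, g (hY.1.eigenvalues i) * wY i)) := by
    apply Complex.ofReal_injective
    rw [linB]; push_cast; ring
  -- lower bound on the M-quadratic form
  have hμτk0 : 0 ≤ μ (τ k) := hM.eigenvalues_nonneg _
  have boundM : μ (τ k) ≤ ∑ i, μ i * wM i := by
    calc μ (τ k) = ∑ i, μ (τ k) * wM i := by rw [← Finset.mul_sum, hwM1, mul_one]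
    _ ≤ ∑ i, μ i * wM i := by
        apply Finset.sum_le_sum
        intro i _
        by_cases his : i ∈ sM
        · obtain ⟨j, hj, rfl⟩ := Finset.mem_image.mp his
          exact mul_le_mul_of_nonneg_right
            (Tuple.monotone_sort μ (Finset.mem_Ici.mp hj)) (hwM0 _)
        · rw [hwM_supp i his, mul_zero, mul_zero]
  have boundB : (∑ i, β i * wB i) ≤ β (σ k) := by
    calc (∑ i, β i * wB i) ≤ ∑ i, β (σ k) * wB i := by
          apply Finset.sum_le_sum
          intro i _
          by_cases his : i ∈ sB
          · obtain ⟨j, hj, rfl⟩ := Finset.mem_image.mp his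
            exact mul_le_mul_of_nonneg_right
              (Tuple.monotone_sort β (Finset.mem_Iic.mp hj)) (hwB0 _)
          · rw [hwB_supp i his, mul_zero, mul_zero]
    _ = β (σ k) := by rw [← Finset.mul_sum, hwB1, mul_one]
  -- Jensen for X and Y
  have rX0 : 0 ≤ ∑ i, hX.1.eigenvalues i * wX i :=
    Finset.sum_nonneg fun i _ => mul_nonneg (hX.eigenvalues_nonneg i) (hwX0 i)
  have rY0 : 0 ≤ ∑ i, hY.1.eigenvalues i * wY i :=
    Finset.sum_nonneg fun i _ => mul_nonneg (hY.eigenvalues_nonneg i) (hwY0 i)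
  have jensenX : g (∑ i, hX.1.eigenvalues i * wX i) ≤ ∑ i, g (hX.1.eigenvalues i) * wX i := by
    have h := hg_conv.map_sum_le (t := Finset.univ) (w := wX) (p := hX.1.eigenvalues)
      (fun i _ => hwX0 i) hwX1 (fun i _ => hX.eigenvalues_nonneg i)
    calc g (∑ i, hX.1.eigenvalues i * wX i) = g (∑ i, wX i • hX.1.eigenvalues i) := by
          congr 1; exact Finset.sum_congr rfl fun i _ => by rw [smul_eq_mul, mul_comm]
      _ ≤ ∑ i, wX i • g (hX.1.eigenvalues i) := h
      _ = ∑ i, g (hX.1.eigenvalues i) * wX i :=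
          Finset.sum_congr rfl fun i _ => by rw [smul_eq_mul, mul_comm]
  have jensenY : g (∑ i, hY.1.eigenvalues i * wY i) ≤ ∑ i, g (hY.1.eigenvalues i) * wY i := by
    have h := hg_conv.map_sum_le (t := Finset.univ) (w := wY) (p := hY.1.eigenvalues)
      (fun i _ => hwY0 i) hwY1 (fun i _ => hY.eigenvalues_nonneg i)
    calc g (∑ i, hY.1.eigenvalues i * wY i) = g (∑ i, wY i • hY.1.eigenvalues i) := by
          congr 1; exact Finset.sum_congr rfl fun i _ => by rw [smul_eq_mul, mul_comm]
      _ ≤ ∑ i, wY i • g (hY.1.eigenvalues i) := h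
      _ = ∑ i, g (hY.1.eigenvalues i) * wY i :=
          Finset.sum_congr rfl fun i _ => by rw [smul_eq_mul, mul_comm]
  -- midpoint convexity
  have midpoint : g (2⁻¹ * ((∑ i, hX.1.eigenvalues i * wX i) + (∑ i, hY.1.eigenvalues i * wY i)))
      ≤ 2⁻¹ * (g (∑ i, hX.1.eigenvalues i * wX i) + g (∑ i, hY.1.eigenvalues i * wY i)) := by
    have h := hg_conv.2 rX0 rY0 (by norm_num : (0:ℝ) ≤ 2⁻¹) (by norm_num : (0:ℝ) ≤ 2⁻¹)
      (by norm_num : (2:ℝ)⁻¹ + 2⁻¹ = 1)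
    rw [smul_eq_mul, smul_eq_mul, smul_eq_mul] at h
    calc g (2⁻¹ * ((∑ i, hX.1.eigenvalues i * wX i) + (∑ i, hY.1.eigenvalues i * wY i)))
        = g (2⁻¹ * (∑ i, hX.1.eigenvalues i * wX i) + 2⁻¹ * (∑ i, hY.1.eigenvalues i * wY i)) := by
          rw [mul_add]
      _ ≤ 2⁻¹ * g (∑ i, hX.1.eigenvalues i * wX i) + 2⁻¹ * g (∑ i, hY.1.eigenvalues i * wY i) := h
      _ = 2⁻¹ * (g (∑ i, hX.1.eigenvalues i * wX i) + g (∑ i, hY.1.eigenvalues i * wY i)) := by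
          ring
  -- monotonicity
  have hrM0 : (∑ i, μ i * wM i) ∈ Set.Ici (0:ℝ) := le_trans hμτk0 boundM
  have mono1 : g (μ (τ k)) ≤ g (∑ i, μ i * wM i) := hg_mono hμτk0 hrM0 boundM
  -- chain
  calc g (μ (τ k)) ≤ g (∑ i, μ i * wM i) := mono1
    _ = g (2⁻¹ * ((∑ i, hX.1.eigenvalues i * wX i) + (∑ i, hY.1.eigenvalues i * wY i))) := by
        rw [linM']
    _ ≤ 2⁻¹ * (g (∑ i, hX.1.eigenvalues i * wX i) + g (∑ i, hY.1.eigenvalues i * wY i)) :=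
        midpoint
    _ ≤ 2⁻¹ * ((∑ i, g (hX.1.eigenvalues i) * wX i) + (∑ i, g (hY.1.eigenvalues i) * wY i)) := by
        apply mul_le_mul_of_nonneg_left (add_le_add jensenX jensenY) (by norm_num)
    _ = ∑ i, β i * wB i := linB'.symm
    _ ≤ β (σ k) := boundB
/-- **[BL, Corollary 2.2].** If `X, Y` are positive semidefinite `n`-by-`n` matrices and `g`
is a nondecreasing convex continuous function on `[0,∞)`, then
`(g(X)+g(Y))/2 ≥ W g((X+Y)/2) W*` for some unitary `W`. Here `g` is applied to a
positive semidefinite matrix via the (continuous) functional calculus `cfc`. -/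
theorem convexity_unitary_orbit {n : ℕ} (X Y : Matrix (Fin n) (Fin n) ℂ)
    (hX : X.PosSemidef) (hY : Y.PosSemidef) (g : ℝ → ℝ)
    (hg_cont : ContinuousOn g (Set.Ici 0)) (hg_mono : MonotoneOn g (Set.Ici 0))
    (hg_conv : ConvexOn ℝ (Set.Ici 0) g) :
    ∃ W : Matrix (Fin n) (Fin n) ℂ, W ∈ Matrix.unitaryGroup (Fin n) ℂ ∧
      ((2:ℂ)⁻¹ • (cfc g X + cfc g Y) - W * cfc g ((2:ℂ)⁻¹ • (X + Y)) * Wᴴ).PosSemidef := by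
  have hsmul : ∀ {A : Matrix (Fin n) (Fin n) ℂ}, A.IsHermitian → ((2:ℂ)⁻¹ • A).IsHermitian := by
    intro A hA
    show ((2:ℂ)⁻¹ • A)ᴴ = _
    rw [conjTranspose_smul, hA.eq]
    congr 1
    simp
  have hhalf : (0:ℂ) ≤ 2⁻¹ := by
    rw [show ((2:ℂ))⁻¹ = ((2⁻¹:ℝ):ℂ) by norm_num]
    exact Complex.zero_le_real.mpr (by norm_num)
  have hM : ((2:ℂ)⁻¹ • (X + Y)).PosSemidef := by
    exact (hX.add hY).smul hhalf
  have hMh : ((2:ℂ)⁻¹ • (X + Y)).IsHermitian := hM.1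
  have hgXh : (cfc g X).IsHermitian := cfc_predicate g X
  have hgYh : (cfc g Y).IsHermitian := cfc_predicate g Y
  have hBh : ((2:ℂ)⁻¹ • (cfc g X + cfc g Y)).IsHermitian := hsmul (hgXh.add hgYh)
  set μ := hMh.eigenvalues with hμdef
  set β := hBh.eigenvalues with hβdef
  set τ := Tuple.sort μ with hτdef
  set σ := Tuple.sort β with hσdef
  set π : Equiv.Perm (Fin n) := (σ⁻¹).trans τ with hπdef
  obtain ⟨P, hPmem, hPd⟩ := perm_conj (n := n) π
  set UM : Matrix (Fin n) (Fin n) ℂ := (hMh.eigenvectorUnitary : Matrix (Fin n) (Fin n) ℂ) with hUMdef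
  set UB : Matrix (Fin n) (Fin n) ℂ := (hBh.eigenvectorUnitary : Matrix (Fin n) (Fin n) ℂ) with hUBdef
  have hUMmem : UM ∈ Matrix.unitaryGroup (Fin n) ℂ := hMh.eigenvectorUnitary.2
  have hUBmem : UB ∈ Matrix.unitaryGroup (Fin n) ℂ := hBh.eigenvectorUnitary.2
  set d : Fin n → ℂ := (RCLike.ofReal : ℝ → ℂ) ∘ (g ∘ μ) with hddef
  refine ⟨UB * P * star UM, mul_mem (mul_mem hUBmem hPmem) (Unitary.star_mem hUMmem), ?_⟩
  have hcfcM : cfc g ((2:ℂ)⁻¹ • (X + Y)) = UM * diagonal d * star UM := (hMh.cfc_eq g).trans rfl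
  have h1 : ∀ z : Matrix (Fin n) (Fin n) ℂ, star UM * (UM * z) = z := fun z => by
    rw [← mul_assoc, Unitary.star_mul_self_of_mem hUMmem, one_mul]
  have h1' : star UM * UM = 1 := Unitary.star_mul_self_of_mem hUMmem
  have hconj : (UB * P * star UM) * cfc g ((2:ℂ)⁻¹ • (X + Y)) * (UB * P * star UM)ᴴ
      = UB * diagonal (d ∘ π) * star UB := by
    rw [← star_eq_conjTranspose, hcfcM, ← hPd d]
    simp only [Matrix.star_mul, star_star, mul_assoc, h1, h1']
  rw [hconj]
  have hBspec : (2:ℂ)⁻¹ • (cfc g X + cfc g Y)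
      = UB * diagonal ((RCLike.ofReal : ℝ → ℂ) ∘ β) * star UB := hBh.spectral_theorem
  rw [hBspec]
  have hdiff : UB * diagonal ((RCLike.ofReal : ℝ → ℂ) ∘ β) * star UB
      - UB * diagonal (d ∘ π) * star UB
      = UB * (diagonal (fun i => ((RCLike.ofReal : ℝ → ℂ) ∘ β) i - (d ∘ π) i)) * star UB := by
    rw [← diagonal_sub, ← sub_mul, ← mul_sub]
  rw [hdiff, star_eq_conjTranspose UB]
  apply Matrix.PosSemidef.mul_mul_conjTranspose_same
  apply Matrix.posSemidef_diagonal_iff.mpr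
  intro i
  have hkey := key_ineq X Y hX hY g hg_mono hg_conv hMh hM hBh (σ⁻¹ i)
  have hπi : π i = τ (σ⁻¹ i) := by simp [hπdef]
  have hσi : σ (σ⁻¹ i) = i := Equiv.apply_symm_apply σ i
  rw [← hσdef, ← hτdef, ← hμdef, ← hβdef] at hkey
  rw [hσi] at hkey
  show 0 ≤ ((RCLike.ofReal : ℝ → ℂ) ∘ β) i - (d ∘ π) i
  have : ((RCLike.ofReal : ℝ → ℂ) ∘ β) i - (d ∘ π) i = ((β i - g (μ (π i)) : ℝ) : ℂ) := by
    simp [hddef]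
  rw [this]
  apply Complex.zero_le_real.mpr
  rw [sub_nonneg, hπi]
  exact hkey
end

section
/- Let M be a 2n-by-2n positive semidefinite complex matrix partitioned into four n-by-n blocks X, Y, Y*, Z (so M has first row of blocks (X, Y) and second row (Y*, Z)). Then there exist 2n-by-2n unitary matrices U and V such that M = U (X ⊕ 0) U* + V (0 ⊕ Z) V*. -/
open Matrix
open scoped ComplexOrder InnerProductSpace MatrixOrder

section Polar

variable {m : Type*} [Fintype m] [DecidableEq m]

private lemma toEuclideanLin_mul' (A B : Matrix m m ℂ) :
    Matrix.toEuclideanLin (A * B) =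
      (Matrix.toEuclideanLin A).comp (Matrix.toEuclideanLin B) := by
  rw [Matrix.toEuclideanLin_eq_toLin]
  exact Matrix.toLin_mul (PiLp.basisFun 2 ℂ m) (PiLp.basisFun 2 ℂ m)
    (PiLp.basisFun 2 ℂ m) A B

private lemma toEuclideanLin_one' :
    Matrix.toEuclideanLin (1 : Matrix m m ℂ) = LinearMap.id := by
  rw [Matrix.toEuclideanLin_eq_toLin]
  exact Matrix.toLin_one _

/-- Polar decomposition: every square complex matrix is a unitary times the
positive semidefinite square root of `Kᴴ * K`. -/
private lemma exists_unitary_polar (K : Matrix m m ℂ) :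
    ∃ U ∈ Matrix.unitaryGroup m ℂ,
      K = U * CFC.sqrt (Kᴴ * K) := by
  set S : Matrix m m ℂ := CFC.sqrt (Kᴴ * K) with hSdef
  have hSherm : Sᴴ = S := (CFC.sqrt_nonneg (Kᴴ * K)).posSemidef.1
  have hSS : S * S = Kᴴ * K := CFC.sqrt_mul_sqrt_self (Kᴴ * K) (Matrix.posSemidef_conjTranspose_mul_self K).nonneg
  set k : EuclideanSpace ℂ m →ₗ[ℂ] EuclideanSpace ℂ m := Matrix.toEuclideanLin K with hk
  set s : EuclideanSpace ℂ m →ₗ[ℂ] EuclideanSpace ℂ m := Matrix.toEuclideanLin S with hs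
  have hadj : (LinearMap.adjoint k).comp k = (LinearMap.adjoint s).comp s := by
    rw [hk, hs, ← Matrix.toEuclideanLin_conjTranspose_eq_adjoint,
      ← Matrix.toEuclideanLin_conjTranspose_eq_adjoint, ← toEuclideanLin_mul',
      ← toEuclideanLin_mul', hSherm, hSS]
  have hnorm : ∀ x : EuclideanSpace ℂ m, ‖k x‖ = ‖s x‖ := by
    intro x
    have h1 : ⟪((LinearMap.adjoint k).comp k) x, x⟫_ℂ
        = ⟪((LinearMap.adjoint s).comp s) x, x⟫_ℂ := by rw [hadj]
    simp only [LinearMap.comp_apply, LinearMap.adjoint_inner_left] at h1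
    rw [@norm_eq_sqrt_re_inner ℂ, @norm_eq_sqrt_re_inner ℂ, h1]
  have hker : LinearMap.ker s ≤ LinearMap.ker k := by
    intro x hx
    rw [LinearMap.mem_ker] at hx ⊢
    have h2 := hnorm x
    rw [hx, norm_zero, norm_eq_zero] at h2
    exact h2
  set q : (EuclideanSpace ℂ m ⧸ LinearMap.ker s) →ₗ[ℂ] EuclideanSpace ℂ m :=
    (LinearMap.ker s).liftQ k hker with hq
  set f : LinearMap.range s →ₗ[ℂ] EuclideanSpace ℂ m :=
    q.comp s.quotKerEquivRange.symm.toLinearMap with hfdef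
  have hf : ∀ x : EuclideanSpace ℂ m,
      f ⟨s x, LinearMap.mem_range_self s x⟩ = k x := by
    intro x
    have h2 : s.quotKerEquivRange.symm ⟨s x, LinearMap.mem_range_self s x⟩
        = (LinearMap.ker s).mkQ x :=
      s.quotKerEquivRange_symm_apply_image x (LinearMap.mem_range_self s x)
    simp only [hfdef, hq, LinearMap.comp_apply, LinearEquiv.coe_coe, h2,
      Submodule.mkQ_apply, Submodule.liftQ_apply]
  have hfnorm : ∀ y : LinearMap.range s, ‖f y‖ = ‖y‖ := by
    rintro ⟨-, x, rfl⟩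
    have h3 : (⟨s x, ⟨x, rfl⟩⟩ : LinearMap.range s)
        = ⟨s x, LinearMap.mem_range_self s x⟩ := rfl
    rw [h3, hf x]
    have h4 : ‖(⟨s x, LinearMap.mem_range_self s x⟩ : LinearMap.range s)‖ = ‖s x‖ := rfl
    rw [h4, hnorm x]
  set Liso : LinearMap.range s →ₗᵢ[ℂ] EuclideanSpace ℂ m := ⟨f, hfnorm⟩ with hLiso
  set W := Liso.extend with hWdef
  have hW : ∀ x : EuclideanSpace ℂ m, W (s x) = k x := by
    intro x
    have h5 := Liso.extend_apply ⟨s x, LinearMap.mem_range_self s x⟩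
    rw [hWdef]
    calc Liso.extend (s x) = Liso.extend ((⟨s x, LinearMap.mem_range_self s x⟩ :
        LinearMap.range s) : EuclideanSpace ℂ m) := rfl
    _ = Liso ⟨s x, LinearMap.mem_range_self s x⟩ := h5
    _ = f ⟨s x, LinearMap.mem_range_self s x⟩ := rfl
    _ = k x := hf x
  set U : Matrix m m ℂ := Matrix.toEuclideanLin.symm W.toLinearMap with hUdef
  have hU : Matrix.toEuclideanLin U = W.toLinearMap :=
    Matrix.toEuclideanLin.apply_symm_apply _
  have hstar : star U * U = 1 := by
    apply Matrix.toEuclideanLin.injective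
    rw [toEuclideanLin_mul', toEuclideanLin_one', Matrix.star_eq_conjTranspose,
      Matrix.toEuclideanLin_conjTranspose_eq_adjoint, hU]
    apply LinearMap.ext
    intro x
    apply ext_inner_left ℂ
    intro v
    rw [LinearMap.comp_apply, LinearMap.adjoint_inner_right, LinearMap.id_apply]
    exact W.inner_map_map v x
  refine ⟨U, Matrix.mem_unitaryGroup_iff'.mpr hstar, ?_⟩
  apply Matrix.toEuclideanLin.injective
  rw [toEuclideanLin_mul', hU]
  apply LinearMap.ext
  intro x
  exact (hW x).symm

end Polar

/-- **[BL, Lemma 3.4].** A positive semidefinite `2n`-by-`2n` matrix partitioned into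
`n`-by-`n` blocks `X, Y, Yᴴ, Z` is a sum of unitary conjugates of `X ⊕ 0` and `0 ⊕ Z`. -/
theorem posSemidef_block_decomposition {n : ℕ} (X Y Z : Matrix (Fin n) (Fin n) ℂ)
    (hM : (Matrix.fromBlocks X Y Yᴴ Z).PosSemidef) :
    ∃ U V : Matrix (Fin n ⊕ Fin n) (Fin n ⊕ Fin n) ℂ,
      U ∈ Matrix.unitaryGroup (Fin n ⊕ Fin n) ℂ ∧ V ∈ Matrix.unitaryGroup (Fin n ⊕ Fin n) ℂ ∧
      Matrix.fromBlocks X Y Yᴴ Z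
        = U * Matrix.fromBlocks X 0 0 0 * Uᴴ + V * Matrix.fromBlocks 0 0 0 Z * Vᴴ := by
  set M : Matrix (Fin n ⊕ Fin n) (Fin n ⊕ Fin n) ℂ := Matrix.fromBlocks X Y Yᴴ Z with hMdef
  set S : Matrix (Fin n ⊕ Fin n) (Fin n ⊕ Fin n) ℂ := CFC.sqrt M with hSdef
  have hSherm : Sᴴ = S := (CFC.sqrt_nonneg M).posSemidef.1
  have hSS : S * S = M := CFC.sqrt_mul_sqrt_self M hM.nonneg
  set E₁ : Matrix (Fin n ⊕ Fin n) (Fin n ⊕ Fin n) ℂ := Matrix.fromBlocks 1 0 0 0 with hE₁def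
  set E₂ : Matrix (Fin n ⊕ Fin n) (Fin n ⊕ Fin n) ℂ := Matrix.fromBlocks 0 0 0 1 with hE₂def
  have hE₁herm : E₁ᴴ = E₁ := by
    simp [hE₁def, Matrix.fromBlocks_conjTranspose]
  have hE₂herm : E₂ᴴ = E₂ := by
    simp [hE₂def, Matrix.fromBlocks_conjTranspose]
  have hE₁idem : E₁ * E₁ = E₁ := by
    simp [hE₁def, Matrix.fromBlocks_multiply]
  have hE₂idem : E₂ * E₂ = E₂ := by
    simp [hE₂def, Matrix.fromBlocks_multiply]
  have hEsum : E₁ + E₂ = 1 := by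
    rw [hE₁def, hE₂def, Matrix.fromBlocks_add, ← Matrix.fromBlocks_one]
    simp
  set K : Matrix (Fin n ⊕ Fin n) (Fin n ⊕ Fin n) ℂ := E₁ * S with hKdef
  set L : Matrix (Fin n ⊕ Fin n) (Fin n ⊕ Fin n) ℂ := E₂ * S with hLdef
  have hKconj : Kᴴ = S * E₁ := by rw [hKdef, Matrix.conjTranspose_mul, hSherm, hE₁herm]
  have hLconj : Lᴴ = S * E₂ := by rw [hLdef, Matrix.conjTranspose_mul, hSherm, hE₂herm]
  have hKK : Kᴴ * K = S * (E₁ * S) := by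
    rw [hKconj, hKdef, mul_assoc, ← mul_assoc E₁ E₁ S, hE₁idem]
  have hLL : Lᴴ * L = S * (E₂ * S) := by
    rw [hLconj, hLdef, mul_assoc, ← mul_assoc E₂ E₂ S, hE₂idem]
  have hsum : Kᴴ * K + Lᴴ * L = M := by
    rw [hKK, hLL, ← mul_add, ← add_mul, hEsum, one_mul, hSS]
  have hKKh : K * Kᴴ = Matrix.fromBlocks X 0 0 0 := by
    rw [hKdef, hKconj, mul_assoc, ← mul_assoc S S E₁, hSS, ← mul_assoc, hMdef, hE₁def]
    simp [Matrix.fromBlocks_multiply]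
  have hLLh : L * Lᴴ = Matrix.fromBlocks 0 0 0 Z := by
    rw [hLdef, hLconj, mul_assoc, ← mul_assoc S S E₂, hSS, ← mul_assoc, hMdef, hE₂def]
    simp [Matrix.fromBlocks_multiply]
  obtain ⟨U₁, hU₁m, hU₁⟩ := exists_unitary_polar K
  obtain ⟨V₁, hV₁m, hV₁⟩ := exists_unitary_polar L
  have hU₁star : U₁ᴴ * U₁ = 1 := by
    rw [← Matrix.star_eq_conjTranspose]
    exact (Unitary.mem_iff.mp hU₁m).1
  have hV₁star : V₁ᴴ * V₁ = 1 := by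
    rw [← Matrix.star_eq_conjTranspose]
    exact (Unitary.mem_iff.mp hV₁m).1
  -- K * Kᴴ = U₁ * (Kᴴ * K) * U₁ᴴ
  have hKpolar : K * Kᴴ = U₁ * (Kᴴ * K) * U₁ᴴ := by
    set SK := CFC.sqrt (Kᴴ * K) with hSKdef
    have h1 : SKᴴ = SK := (CFC.sqrt_nonneg (Kᴴ * K)).posSemidef.1
    have h2 : SK * SK = Kᴴ * K := CFC.sqrt_mul_sqrt_self (Kᴴ * K) (Matrix.posSemidef_conjTranspose_mul_self K).nonneg
    calc K * Kᴴ = (U₁ * SK) * (U₁ * SK)ᴴ := by rw [← hU₁]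
    _ = U₁ * (SK * SK) * U₁ᴴ := by
        rw [Matrix.conjTranspose_mul, h1, mul_assoc, mul_assoc, mul_assoc]
    _ = U₁ * (Kᴴ * K) * U₁ᴴ := by rw [h2]
  have hLpolar : L * Lᴴ = V₁ * (Lᴴ * L) * V₁ᴴ := by
    set SL := CFC.sqrt (Lᴴ * L) with hSLdef
    have h1 : SLᴴ = SL := (CFC.sqrt_nonneg (Lᴴ * L)).posSemidef.1
    have h2 : SL * SL = Lᴴ * L := CFC.sqrt_mul_sqrt_self (Lᴴ * L) (Matrix.posSemidef_conjTranspose_mul_self L).nonneg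
    calc L * Lᴴ = (V₁ * SL) * (V₁ * SL)ᴴ := by rw [← hV₁]
    _ = V₁ * (SL * SL) * V₁ᴴ := by
        rw [Matrix.conjTranspose_mul, h1, mul_assoc, mul_assoc, mul_assoc]
    _ = V₁ * (Lᴴ * L) * V₁ᴴ := by rw [h2]
  refine ⟨U₁ᴴ, V₁ᴴ, ?_, ?_, ?_⟩
  · rw [← Matrix.star_eq_conjTranspose]
    exact Unitary.star_mem hU₁m
  · rw [← Matrix.star_eq_conjTranspose]
    exact Unitary.star_mem hV₁m
  · have hUterm : U₁ᴴ * Matrix.fromBlocks X 0 0 0 * U₁ᴴᴴ = Kᴴ * K := by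
      rw [Matrix.conjTranspose_conjTranspose, ← hKKh, hKpolar]
      calc U₁ᴴ * (U₁ * (Kᴴ * K) * U₁ᴴ) * U₁
          = (U₁ᴴ * U₁) * (Kᴴ * K) * (U₁ᴴ * U₁) := by
            simp only [mul_assoc]
      _ = Kᴴ * K := by rw [hU₁star, one_mul, mul_one]
    have hVterm : V₁ᴴ * Matrix.fromBlocks 0 0 0 Z * V₁ᴴᴴ = Lᴴ * L := by
      rw [Matrix.conjTranspose_conjTranspose, ← hLLh, hLpolar]
      calc V₁ᴴ * (V₁ * (Lᴴ * L) * V₁ᴴ) * V₁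
          = (V₁ᴴ * V₁) * (Lᴴ * L) * (V₁ᴴ * V₁) := by
            simp only [mul_assoc]
      _ = Lᴴ * L := by rw [hV₁star, one_mul, mul_one]
    rw [hUterm, hVterm, hsum]
end
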